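/- For every real q in [0,2] with q ≠ 1 and every x in [0,1], the q-Tsallis binary entropy satisfies Hqᵀ(1/2)·4x(1-x) ≤ Hqᵀ(x). -/

import Mathlib

/-!
With `t = 1 - 2x` the inequality becomes
`(q - 1) ((1 + t)^q + (1 - t)^q) ≤ (q - 1) (2 + (2^q - 2) t²)`, and the left side is a convex
function of `u = t² ∈ [0, 1]`, so it lies below its chord. Its derivative in `u` is, up to the
factor `q / 2`, the secant slope from `0` of `s ↦ (q - 1) ((1 + s)^(q-1) - (1 - s)^(q-1))` at
`s = √u`; that function is convex on `[0, 1)` since its derivative is `(q - 1)²` times the even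
convex function `(1 + s)^(q-2) + (1 - s)^(q-2)`, which increases on `[0, 1)`.
-/

/-- The `q`-Tsallis binary entropy `Hqᵀ(x) = (1 - x^q - (1-x)^q)/(q-1)`. -/
noncomputable def tsallisBin (q x : ℝ) : ℝ := (1 - x ^ q - (1 - x) ^ q) / (q - 1)

open Real Set

noncomputable def evenRpow (r s : ℝ) : ℝ := (1 + s) ^ r + (1 - s) ^ r

noncomputable def oddRpow (r s : ℝ) : ℝ := (1 + s) ^ r - (1 - s) ^ r

section

variable {r s : ℝ}

lemma evenRpow_abs (r s : ℝ) : evenRpow r |s| = evenRpow r s := by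
  rcases abs_choice s with h | h <;> rw [h]
  rw [evenRpow, evenRpow, sub_neg_eq_add, ← sub_eq_add_neg, add_comm]

lemma oddRpow_zero (r : ℝ) : oddRpow r 0 = 0 := by
  simp [oddRpow]

lemma hasDerivAt_one_add_rpow (r : ℝ) (hs : -1 < s) :
    HasDerivAt (fun s => (1 + s) ^ r) (r * (1 + s) ^ (r - 1)) s := by
  simpa using ((hasDerivAt_id' s).const_add 1).rpow_const (p := r) (Or.inl (by linarith))

lemma hasDerivAt_one_sub_rpow (r : ℝ) (hs : s < 1) :
    HasDerivAt (fun s => (1 - s) ^ r) (-(r * (1 - s) ^ (r - 1))) s := by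
  simpa using ((hasDerivAt_id' s).const_sub 1).rpow_const (p := r) (Or.inl (by linarith))

lemma hasDerivAt_evenRpow (r : ℝ) (hs : s ∈ Ioo (-1) 1) :
    HasDerivAt (evenRpow r) (r * oddRpow (r - 1) s) s := by
  refine ((hasDerivAt_one_add_rpow r hs.1).add (hasDerivAt_one_sub_rpow r hs.2)).congr_deriv ?_
  rw [oddRpow]; ring

lemma hasDerivAt_oddRpow (r : ℝ) (hs : s ∈ Ioo (-1) 1) :
    HasDerivAt (oddRpow r) (r * evenRpow (r - 1) s) s := by
  refine ((hasDerivAt_one_add_rpow r hs.1).sub (hasDerivAt_one_sub_rpow r hs.2)).congr_deriv ?_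
  rw [evenRpow]; ring

lemma continuous_evenRpow (hr : 0 ≤ r) : Continuous (evenRpow r) := by
  unfold evenRpow
  fun_prop (disch := exact hr)

lemma monotoneOn_evenRpow (hr : r ≤ 0) : MonotoneOn (evenRpow r) (Ico 0 1) := by
  have hderiv : ∀ s ∈ Ico (0 : ℝ) 1, HasDerivAt (evenRpow r) (r * oddRpow (r - 1) s) s :=
    fun s hs => hasDerivAt_evenRpow r ⟨by linarith [hs.1], hs.2⟩
  apply monotoneOn_of_deriv_nonneg (convex_Ico 0 1)
  · exact fun s hs => (hderiv s hs).continuousAt.continuousWithinAt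
  · rw [interior_Ico]
    exact fun s hs => (hderiv s (Ioo_subset_Ico_self hs)).differentiableAt.differentiableWithinAt
  · rw [interior_Ico]
    intro s hs
    rw [(hderiv s (Ioo_subset_Ico_self hs)).deriv]
    have hodd : oddRpow (r - 1) s ≤ 0 :=
      sub_nonpos.2 (rpow_le_rpow_of_nonpos (by linarith [hs.2]) (by linarith [hs.1]) (by linarith))
    exact mul_nonneg_of_nonpos_of_nonpos hr hodd

lemma convexOn_mul_oddRpow (hr : r ≤ 1) : ConvexOn ℝ (Ico 0 1) (fun s => r * oddRpow r s) := by
  have hderiv : ∀ s ∈ Ico (0 : ℝ) 1,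
      HasDerivAt (fun s => r * oddRpow r s) (r * (r * evenRpow (r - 1) s)) s :=
    fun s hs => (hasDerivAt_oddRpow r ⟨by linarith [hs.1], hs.2⟩).const_mul r
  apply MonotoneOn.convexOn_of_deriv (convex_Ico 0 1)
  · exact fun s hs => (hderiv s hs).continuousAt.continuousWithinAt
  · rw [interior_Ico]
    exact fun s hs => (hderiv s (Ioo_subset_Ico_self hs)).differentiableAt.differentiableWithinAt
  · rw [interior_Ico]
    refine MonotoneOn.congr (f₁ := fun s => r * (r * evenRpow (r - 1) s)) ?_
      fun s hs => ((hderiv s (Ioo_subset_Ico_self hs)).deriv).symm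
    intro a ha b hb hab
    simp only [← mul_assoc]
    exact mul_le_mul_of_nonneg_left (monotoneOn_evenRpow (by linarith)
      (Ioo_subset_Ico_self ha) (Ioo_subset_Ico_self hb) hab) (mul_self_nonneg r)

lemma monotoneOn_mul_oddRpow_div (hr : r ≤ 1) :
    MonotoneOn (fun s => r * oddRpow r s / s) (Ioo 0 1) := by
  intro a ha b hb hab
  have := (convexOn_mul_oddRpow hr).secant_mono (a := 0) ⟨le_rfl, one_pos⟩
    (Ioo_subset_Ico_self ha) (Ioo_subset_Ico_self hb) ha.1.ne' hb.1.ne' hab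
  simpa only [oddRpow_zero, mul_zero, sub_zero] using this

end

lemma sqrt_mem_Ioo_zero_one {u : ℝ} (hu : u ∈ Ioo 0 1) : √u ∈ Ioo 0 1 :=
  ⟨sqrt_pos.2 hu.1, (sqrt_lt' one_pos).2 (by simpa using hu.2)⟩

variable {q : ℝ}

lemma convexOn_mul_evenRpow_sqrt (hq0 : 0 ≤ q) (hq2 : q ≤ 2) :
    ConvexOn ℝ (Icc 0 1) (fun u => (q - 1) * evenRpow q √u) := by
  have hderiv : ∀ u ∈ Ioo (0 : ℝ) 1, HasDerivAt (fun u => (q - 1) * evenRpow q √u)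
      (q / 2 * ((q - 1) * oddRpow (q - 1) √u / √u)) u := by
    intro u hu
    have hs := sqrt_mem_Ioo_zero_one hu
    refine (((hasDerivAt_evenRpow q ⟨by linarith [hs.1], hs.2⟩).comp u
      (hasDerivAt_sqrt hu.1.ne')).const_mul (q - 1)).congr_deriv ?_
    field_simp
  apply MonotoneOn.convexOn_of_deriv (convex_Icc 0 1)
  · exact (continuous_const.mul ((continuous_evenRpow hq0).comp continuous_sqrt)).continuousOn
  · rw [interior_Icc]
    exact fun u hu => (hderiv u hu).differentiableAt.differentiableWithinAt
  · rw [interior_Icc]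
    refine MonotoneOn.congr (f₁ := fun u => q / 2 * ((q - 1) * oddRpow (q - 1) √u / √u)) ?_
      fun u hu => ((hderiv u hu).deriv).symm
    intro a ha b hb hab
    exact mul_le_mul_of_nonneg_left (monotoneOn_mul_oddRpow_div (by linarith)
      (sqrt_mem_Ioo_zero_one ha) (sqrt_mem_Ioo_zero_one hb) (sqrt_le_sqrt hab)) (by positivity)

lemma mul_evenRpow_sqrt_le (hq0 : 0 < q) (hq2 : q ≤ 2) {u : ℝ} (hu : u ∈ Icc 0 1) :
    (q - 1) * evenRpow q √u ≤ (q - 1) * (2 + (2 ^ q - 2) * u) := by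
  have := (convexOn_mul_evenRpow_sqrt hq0.le hq2).2 (x := 0) (y := 1) ⟨le_rfl, zero_le_one⟩
    ⟨zero_le_one, le_rfl⟩ (sub_nonneg.2 hu.2) hu.1 (sub_add_cancel 1 u)
  simp only [smul_eq_mul, mul_zero, mul_one, zero_add, sqrt_zero, sqrt_one, evenRpow, add_zero,
    sub_zero, sub_self, zero_rpow hq0.ne', one_rpow, one_add_one_eq_two] at this ⊢
  linarith

/-- For `q ∈ [0,2]`, `q ≠ 1`, and `x ∈ [0,1]`, `Hqᵀ(1/2)·4x(1-x) ≤ Hqᵀ(x)`. -/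
theorem tsallis_binary_entropy_lower_bound (q x : ℝ) (hq0 : 0 ≤ q) (hq2 : q ≤ 2)
    (hq1 : q ≠ 1) (hx0 : 0 ≤ x) (hx1 : x ≤ 1) :
    tsallisBin q (1 / 2) * (4 * x * (1 - x)) ≤ tsallisBin q x := by
  rcases hq0.eq_or_lt with rfl | hq0
  -- `0 ^ 0 = 1`, so at `q = 0` both entropies are identically `1` and the chord bound fails
  · norm_num [tsallisBin]
    nlinarith [sq_nonneg (2 * x - 1)]
  have hchord := mul_evenRpow_sqrt_le hq0 hq2 (u := (1 - 2 * x) ^ 2) ⟨sq_nonneg _, by nlinarith⟩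
  rw [sqrt_sq_eq_abs, evenRpow_abs, evenRpow, show 1 + (1 - 2 * x) = 2 * (1 - x) by ring,
    show 1 - (1 - 2 * x) = 2 * x by ring, mul_rpow zero_le_two (by linarith),
    mul_rpow zero_le_two hx0] at hchord
  have hgap : tsallisBin q x - tsallisBin q (1 / 2) * (4 * x * (1 - x)) =
      (q - 1) * (2 + (2 ^ q - 2) * (1 - 2 * x) ^ 2 - 2 ^ q * ((1 - x) ^ q + x ^ q)) /
        (2 ^ q * (q - 1) ^ 2) := by
    have h2q : (2 : ℝ) ^ q ≠ 0 := by positivity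
    have hq1' : q - 1 ≠ 0 := sub_ne_zero.2 hq1
    rw [tsallisBin, tsallisBin, show (1 : ℝ) - 1 / 2 = 1 / 2 by norm_num,
      div_rpow zero_le_one zero_le_two, one_rpow]
    field_simp
    ring
  rw [← sub_nonneg, hgap]
  exact div_nonneg (by linarith) (by positivity)
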